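/- arXiv:1310.2639 — 5 statements merged into one kernel-verified Lean document; each statement's English description precedes it below -/
import Mathlib

section
/- If κ is a closed gauge with κ⁻¹(0) = {0}, then the polar gauge κ° is finite everywhere, i.e., dom κ° = X. -/
open scoped RealInnerProductSpace ENNReal

def IsGauge {E : Type*} [NormedAddCommGroup E] [NormedSpace ℝ E] (κ : E → ℝ≥0∞) : Prop :=
  κ 0 = 0 ∧
  (∀ (c : ℝ) (x : E), 0 ≤ c → κ (c • x) = ENNReal.ofReal c * κ x) ∧
  (∀ (x y : E) (a b : ℝ), 0 ≤ a → 0 ≤ b → a + b = 1 →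
    κ (a • x + b • y) ≤ ENNReal.ofReal a * κ x + ENNReal.ofReal b * κ y)

/-- The polar gauge, in its sup form: `κ°(y) = sup {⟨x,y⟩ : κ(x) ≤ 1}`. -/
noncomputable def polarGauge {E : Type*} [NormedAddCommGroup E] [InnerProductSpace ℝ E]
    (κ : E → ℝ≥0∞) (y : E) : ℝ≥0∞ :=
  ⨆ (x : E) (_ : κ x ≤ 1), ENNReal.ofReal ⟪x, y⟫

/-!
By lower semicontinuity `κ` attains its minimum `m` on the compact unit sphere, and `m > 0`
because `κ` vanishes only at the origin. Positive homogeneity then gives `m ‖x‖ ≤ κ x`, so the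
sublevel set `{κ ≤ 1}` lies in the ball of radius `1 / m`, and Cauchy–Schwarz bounds
`κ° y` by `‖y‖ / m`.
-/

open Metric

lemma LowerSemicontinuousOn.exists_pos_le_of_isCompact {α : Type*} [TopologicalSpace α]
    {f : α → ℝ≥0∞} {s : Set α} (hs : IsCompact s) (hf : LowerSemicontinuousOn f s)
    (hpos : ∀ x ∈ s, 0 < f x) : ∃ m, 0 < m ∧ ∀ x ∈ s, m ≤ f x := by
  rcases s.eq_empty_or_nonempty with rfl | hne
  · exact ⟨1, one_pos, by simp⟩
  · obtain ⟨a, ha, hmin⟩ := hf.exists_isMinOn hne hs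
    exact ⟨f a, hpos a ha, hmin⟩

lemma ofReal_norm_mul_le_of_le_on_sphere {E : Type*} [NormedAddCommGroup E] [NormedSpace ℝ E]
    {κ : E → ℝ≥0∞} (hhom : ∀ (c : ℝ) (x : E), 0 ≤ c → κ (c • x) = ENNReal.ofReal c * κ x)
    {m : ℝ≥0∞} (hm : ∀ x ∈ sphere (0 : E) 1, m ≤ κ x) (x : E) :
    ENNReal.ofReal ‖x‖ * m ≤ κ x := by
  rcases eq_or_ne x 0 with rfl | hx
  · simp
  have hnorm : ‖x‖ ≠ 0 := norm_ne_zero_iff.mpr hx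
  have hunit : ‖x‖⁻¹ • x ∈ sphere (0 : E) 1 := by
    rw [mem_sphere_zero_iff_norm, norm_smul, norm_inv, norm_norm, inv_mul_cancel₀ hnorm]
  calc ENNReal.ofReal ‖x‖ * m ≤ ENNReal.ofReal ‖x‖ * κ (‖x‖⁻¹ • x) := by gcongr; exact hm _ hunit
    _ = κ x := by rw [← hhom _ _ (norm_nonneg x), smul_inv_smul₀ hnorm]

lemma isBounded_setOf_le_one_of_pos_le_on_sphere {E : Type*} [NormedAddCommGroup E]
    [NormedSpace ℝ E] {κ : E → ℝ≥0∞}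
    (hhom : ∀ (c : ℝ) (x : E), 0 ≤ c → κ (c • x) = ENNReal.ofReal c * κ x)
    {m : ℝ≥0∞} (hm_pos : 0 < m) (hm : ∀ x ∈ sphere (0 : E) 1, m ≤ κ x) :
    Bornology.IsBounded {x | κ x ≤ 1} := by
  refine isBounded_iff_forall_norm_le.mpr ⟨m⁻¹.toReal, fun x hx => ?_⟩
  have hle : ENNReal.ofReal ‖x‖ ≤ m⁻¹ :=
    ENNReal.le_inv_iff_mul_le.mpr ((ofReal_norm_mul_le_of_le_on_sphere hhom hm x).trans hx)
  exact (ENNReal.ofReal_le_iff_le_toReal (ENNReal.inv_ne_top.mpr hm_pos.ne')).mp hle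

lemma polarGauge_lt_top_of_isBounded {E : Type*} [NormedAddCommGroup E] [InnerProductSpace ℝ E]
    {κ : E → ℝ≥0∞} (hκ : Bornology.IsBounded {x | κ x ≤ 1}) (y : E) :
    polarGauge κ y < ⊤ := by
  obtain ⟨R, hR⟩ := isBounded_iff_forall_norm_le.mp hκ
  have hle : polarGauge κ y ≤ ENNReal.ofReal (R * ‖y‖) :=
    iSup₂_le fun x hx => ENNReal.ofReal_le_ofReal <|
      (real_inner_le_norm x y).trans (mul_le_mul_of_nonneg_right (hR x hx) (norm_nonneg y))
  exact hle.trans_lt ENNReal.ofReal_lt_top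

theorem polarGauge_finite_of_closed_of_zero_only_at_origin {E : Type*} [NormedAddCommGroup E]
    [InnerProductSpace ℝ E] [FiniteDimensional ℝ E] (κ : E → ℝ≥0∞) (hκ : IsGauge κ)
    (hclosed : LowerSemicontinuous κ) (hzero : ∀ x : E, κ x = 0 → x = 0) :
    ∀ y : E, polarGauge κ y < ⊤ := by
  have hpos : ∀ x ∈ sphere (0 : E) 1, 0 < κ x := fun x hx =>
    pos_iff_ne_zero.mpr fun h => ne_zero_of_mem_unit_sphere ⟨x, hx⟩ (hzero x h)
  obtain ⟨m, hm_pos, hm⟩ :=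
    (hclosed.lowerSemicontinuousOn _).exists_pos_le_of_isCompact (isCompact_sphere 0 1) hpos
  exact polarGauge_lt_top_of_isBounded
    (isBounded_setOf_le_one_of_pos_le_on_sphere hκ.2.1 hm_pos hm)
end

section
/- Bi-antipolar theorem: a nonempty closed convex set C not containing the origin satisfies C = C′′ if and only if C is ray-like. -/
open scoped RealInnerProductSpace

/-- The antipolar `C′ = {y : ⟨y,x⟩ ≥ 1 for all x ∈ C}`. -/
def antipolar {E : Type*} [NormedAddCommGroup E] [InnerProductSpace ℝ E] (C : Set E) :
    Set E :=
  {y : E | ∀ x ∈ C, 1 ≤ ⟪y, x⟫}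

/-- A set is ray-like if `x, y ∈ D` and `α ≥ 0` imply `x + αy ∈ D`. -/
def RayLike {E : Type*} [NormedAddCommGroup E] [NormedSpace ℝ E] (D : Set E) : Prop :=
  ∀ x ∈ D, ∀ y ∈ D, ∀ α : ℝ, 0 ≤ α → x + α • y ∈ D

lemma antipolar_rayLike {E : Type*} [NormedAddCommGroup E] [InnerProductSpace ℝ E]
    (C : Set E) : RayLike (antipolar C) := by
  intro x hx y hy α hα z hz
  have h1 := hx z hz
  have h2 := hy z hz
  show (1:ℝ) ≤ _
  rw [inner_add_left, real_inner_smul_left]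
  nlinarith

lemma subset_biantipolar {E : Type*} [NormedAddCommGroup E] [InnerProductSpace ℝ E]
    (C : Set E) : C ⊆ antipolar (antipolar C) := by
  intro x hx y hy
  simpa [real_inner_comm] using hy x hx

theorem bi_antipolar {E : Type*} [NormedAddCommGroup E] [InnerProductSpace ℝ E]
    [FiniteDimensional ℝ E] (C : Set E) (hne : C.Nonempty) (hclosed : IsClosed C)
    (hconv : Convex ℝ C) (h0 : (0 : E) ∉ C) :
    C = antipolar (antipolar C) ↔ RayLike C := by
  constructor
  · intro h
    rw [h]
    exact antipolar_rayLike _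
  · intro hray
    refine le_antisymm (subset_biantipolar C) ?_
    intro z hz
    by_contra hzC
    -- separate 0 from C to get an element of the antipolar
    obtain ⟨w, hwmem⟩ : ∃ w, w ∈ antipolar C := by
      obtain ⟨f₀, u₀, hfu₀, hf₀⟩ := geometric_hahn_banach_point_closed hconv hclosed h0
      have hu₀ : 0 < u₀ := by simpa using hfu₀
      refine ⟨u₀⁻¹ • (InnerProductSpace.toDual ℝ E).symm f₀, fun x hx => ?_⟩
      have hr : ⟪(InnerProductSpace.toDual ℝ E).symm f₀, x⟫ = f₀ x :=
        InnerProductSpace.toDual_symm_apply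
      rw [real_inner_smul_left, hr, inv_mul_eq_div, le_div_iff₀ hu₀, one_mul]
      exact (hf₀ x hx).le
    -- separate z from C
    obtain ⟨y, u, hyz, hyC⟩ :
        ∃ (y : E) (u : ℝ), ⟪y, z⟫ < u ∧ ∀ x ∈ C, u < ⟪y, x⟫ := by
      obtain ⟨f, u, hfu, hf⟩ := geometric_hahn_banach_point_closed hconv hclosed hzC
      refine ⟨(InnerProductSpace.toDual ℝ E).symm f, u, ?_, fun x hx => ?_⟩
      · rw [InnerProductSpace.toDual_symm_apply]; exact hfu
      · rw [InnerProductSpace.toDual_symm_apply]; exact hf x hx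
    rcases lt_or_ge 0 u with hu | hu
    · -- u > 0 : y / u is in the antipolar and ⟪z, y/u⟫ < 1
      have hmem : u⁻¹ • y ∈ antipolar C := by
        intro x hx
        rw [real_inner_smul_left, inv_mul_eq_div, le_div_iff₀ hu, one_mul]
        exact (hyC x hx).le
      have h1 := hz _ hmem
      rw [real_inner_comm, real_inner_smul_left, inv_mul_eq_div, le_div_iff₀ hu,
        one_mul] at h1
      linarith
    · -- u ≤ 0 : then ⟪y,x⟫ ≥ 0 on C by ray-likeness, and ⟪y,z⟫ < 0
      obtain ⟨x₀, hx₀⟩ := hne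
      have hynn : ∀ x ∈ C, 0 ≤ ⟪y, x⟫ := by
        intro x hx
        by_contra hneg
        push_neg at hneg
        have hc : ⟪y, x⟫ ≠ 0 := ne_of_lt hneg
        set α : ℝ := (⟪y, x₀⟫ - u) / (-⟪y, x⟫) with hα
        have hαnn : 0 ≤ α := by
          apply div_nonneg
          · have := hyC x₀ hx₀; linarith
          · linarith
        have hmem := hray x₀ hx₀ x hx α hαnn
        have h2 := hyC _ hmem
        rw [inner_add_right, real_inner_smul_right] at h2
        have hαval : α * ⟪y, x⟫ = -(⟪y, x₀⟫ - u) := by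
          rw [hα, div_mul_eq_mul_div, div_neg, mul_div_assoc, div_self hc, mul_one]
        linarith
      have hyzneg : ⟪y, z⟫ < 0 := lt_of_lt_of_le hyz hu
      have hcz : ⟪y, z⟫ ≠ 0 := ne_of_lt hyzneg
      set t : ℝ := (|⟪w, z⟫| + 1) / (-⟪y, z⟫) with ht
      have htnn : 0 ≤ t := by
        apply div_nonneg
        · positivity
        · linarith
      have hmem : w + t • y ∈ antipolar C := by
        intro x hx
        show (1:ℝ) ≤ _
        rw [inner_add_left, real_inner_smul_left]
        have h1 := hwmem x hx
        have h2 := hynn x hx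
        nlinarith
      have h3 := hz _ hmem
      rw [real_inner_comm, inner_add_left, real_inner_smul_left] at h3
      have htval : t * ⟪y, z⟫ = -(|⟪w, z⟫| + 1) := by
        rw [ht, div_mul_eq_mul_div, div_neg, mul_div_assoc, div_self hcz, mul_one]
      have habs : ⟪w, z⟫ ≤ |⟪w, z⟫| := le_abs_self _
      linarith
end

section
/- For a nonempty closed convex set C not containing the origin, the double antipolar satisfies C′′ = ⋃_{λ ≥ 1} λC. -/
open scoped RealInnerProductSpace Pointwise

theorem bi_antipolar_eq_union {E : Type*} [NormedAddCommGroup E] [InnerProductSpace ℝ E]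
    [FiniteDimensional ℝ E] (C : Set E) (hne : C.Nonempty) (hclosed : IsClosed C)
    (hconv : Convex ℝ C) (h0 : (0 : E) ∉ C) :
    antipolar (antipolar C) = ⋃ (l : ℝ) (_ : 1 ≤ l), l • C := by
  classical
  haveI : CompleteSpace E := FiniteDimensional.complete ℝ E
  set D : Set E := ⋃ (l : ℝ) (_ : 1 ≤ l), l • C with hDdef
  have hDmem : ∀ w : E, w ∈ D ↔ ∃ l : ℝ, 1 ≤ l ∧ ∃ x ∈ C, l • x = w := by
    intro w
    simp only [hDdef, Set.mem_iUnion, Set.mem_smul_set, exists_prop]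
  have hCD : C ⊆ D := fun x hx => (hDmem x).2 ⟨1, le_refl 1, x, hx, one_smul ℝ x⟩
  -- D is convex
  have hDconv : Convex ℝ D := by
    intro p hp q hq s t hs ht hst
    obtain ⟨l, hl, x, hx, rfl⟩ := (hDmem p).1 hp
    obtain ⟨m, hm, z, hz, rfl⟩ := (hDmem q).1 hq
    have hν : 1 ≤ s * l + t * m := by nlinarith
    have hν0 : 0 < s * l + t * m := lt_of_lt_of_le one_pos hν
    refine (hDmem _).2 ⟨s * l + t * m, hν,
      (s * l / (s * l + t * m)) • x + (t * m / (s * l + t * m)) • z, ?_, ?_⟩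
    · exact hconv hx hz (by positivity) (by positivity) (by field_simp)
    · rw [smul_add, smul_smul, smul_smul, smul_smul, smul_smul]
      congr 1 <;> congr 1 <;> field_simp
  -- distance from 0 to C is positive
  have hd : 0 < Metric.infDist (0 : E) C :=
    (hclosed.notMem_iff_infDist_pos hne).1 h0
  set d := Metric.infDist (0 : E) C with hddef
  have hdle : ∀ x ∈ C, d ≤ ‖x‖ := by
    intro x hx
    have := Metric.infDist_le_dist_of_mem (x := (0 : E)) hx
    simpa [dist_eq_norm] using this
  -- D is closed
  have hDclosed : IsClosed D := by
    rw [← isSeqClosed_iff_isClosed]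
    intro w p hw hwp
    choose l hl x hx hlx using fun n => (hDmem (w n)).1 (hw n)
    -- the sequence w is bounded in norm
    obtain ⟨M, hM⟩ : ∃ M : ℝ, ∀ n, ‖w n‖ ≤ M := by
      obtain ⟨M, hM⟩ := (Metric.isBounded_range_of_tendsto w hwp).exists_norm_le
      exact ⟨M, fun n => hM _ ⟨n, rfl⟩⟩
    -- hence l is bounded
    have hlb : ∀ n, l n ∈ Set.Icc (1 : ℝ) (M / d) := by
      intro n
      refine ⟨hl n, ?_⟩
      have h1 : l n * d ≤ l n * ‖x n‖ :=
        mul_le_mul_of_nonneg_left (hdle _ (hx n)) (by linarith [hl n])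
      have h2 : l n * ‖x n‖ = ‖w n‖ := by
        rw [← hlx n, norm_smul, Real.norm_eq_abs, abs_of_pos (by linarith [hl n])]
      have := (h1.trans_eq h2).trans (hM n)
      exact (le_div_iff₀ hd).2 (by linarith)
    obtain ⟨a, ha, φ, hφ, hlim⟩ :=
      tendsto_subseq_of_bounded (Metric.isBounded_Icc (1 : ℝ) (M / d)) hlb
    have ha1 : 1 ≤ a := (isClosed_Icc.closure_subset ha).1
    have ha0 : a ≠ 0 := by positivity
    -- x ∘ φ tends to a⁻¹ • p
    have hxlim : Filter.Tendsto (fun n => x (φ n)) Filter.atTop (nhds (a⁻¹ • p)) := by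
      have h1 : Filter.Tendsto (fun n => (l (φ n))⁻¹ • w (φ n)) Filter.atTop
          (nhds (a⁻¹ • p)) :=
        Filter.Tendsto.smul (hlim.inv₀ ha0) (hwp.comp hφ.tendsto_atTop)
      refine h1.congr fun n => ?_
      rw [← hlx (φ n), smul_smul, inv_mul_cancel₀ (by linarith [hl (φ n)] : l (φ n) ≠ 0),
        one_smul]
    have hmem : a⁻¹ • p ∈ C := hclosed.isSeqClosed (fun n => hx (φ n)) hxlim
    exact (hDmem p).2 ⟨a, ha1, a⁻¹ • p, hmem, by rw [smul_smul, mul_inv_cancel₀ ha0, one_smul]⟩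
  -- the antipolar of C is nonempty
  obtain ⟨z0, hz0⟩ : (antipolar C).Nonempty := by
    obtain ⟨f0, u0, hf0z, hf0⟩ := geometric_hahn_banach_point_closed hconv hclosed h0
    have hu0 : 0 < u0 := by simpa using hf0z
    refine ⟨u0⁻¹ • (InnerProductSpace.toDual ℝ E).symm f0, fun x hx => ?_⟩
    rw [real_inner_smul_left, InnerProductSpace.toDual_symm_apply]
    have h2 : u0⁻¹ * u0 ≤ u0⁻¹ * f0 x :=
      mul_le_mul_of_nonneg_left (hf0 x hx).le (by positivity)
    rwa [inv_mul_cancel₀ hu0.ne'] at h2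
  apply Set.Subset.antisymm
  · -- hard direction
    intro y hy
    by_contra hyD
    obtain ⟨f, u, hfy, hfD⟩ := geometric_hahn_banach_point_closed hDconv hDclosed hyD
    obtain ⟨a, ha⟩ : ∃ a : E, ∀ v, ⟪a, v⟫ = f v :=
      ⟨(InnerProductSpace.toDual ℝ E).symm f, fun v => InnerProductSpace.toDual_symm_apply⟩
    have hfpos : ∀ x ∈ C, 0 ≤ f x := by
      intro x hx
      by_contra h
      push_neg at h
      set lam : ℝ := max 1 (u / f x) with hlam
      have hlam1 : 1 ≤ lam := le_max_left _ _
      have hmem : lam • x ∈ D := (hDmem _).2 ⟨lam, hlam1, x, hx, rfl⟩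
      have h3 := hfD _ hmem
      rw [map_smul, smul_eq_mul] at h3
      have h2 : lam * f x ≤ u := by
        have hm : u / f x ≤ lam := le_max_right _ _
        calc lam * f x ≤ (u / f x) * f x := by nlinarith
          _ = u := div_mul_cancel₀ u h.ne
      linarith
    rcases lt_or_ge 0 u with hu | hu
    · -- u > 0 : scale to get an element of the antipolar of C
      have hz : u⁻¹ • a ∈ antipolar C := by
        intro x hx
        rw [real_inner_smul_left, ha]
        have h2 : u⁻¹ * u ≤ u⁻¹ * f x :=
          mul_le_mul_of_nonneg_left (hfD x (hCD hx)).le (by positivity)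
        rwa [inv_mul_cancel₀ hu.ne'] at h2
      have hcon := hy _ hz
      rw [real_inner_comm, real_inner_smul_left, ha] at hcon
      have h2 : u⁻¹ * f y < u⁻¹ * u :=
        mul_lt_mul_of_pos_left hfy (by positivity)
      rw [inv_mul_cancel₀ hu.ne'] at h2
      linarith
    · -- u ≤ 0 : then f y < 0, perturb z0
      have hfy0 : f y < 0 := lt_of_lt_of_le hfy hu
      set t : ℝ := max 0 (⟪z0, y⟫ / (-f y)) with htdef
      have ht0 : 0 ≤ t := le_max_left _ _
      have hz : z0 + t • a ∈ antipolar C := by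
        intro x hx
        rw [inner_add_left, real_inner_smul_left, ha]
        have h1 : 1 ≤ ⟪z0, x⟫ := hz0 x hx
        nlinarith [hfpos x hx]
      have hcon := hy _ hz
      rw [real_inner_comm, inner_add_left, real_inner_smul_left, ha] at hcon
      have ht2 : ⟪z0, y⟫ / (-f y) ≤ t := le_max_right _ _
      have hny : 0 < -f y := by linarith
      have h3 : ⟪z0, y⟫ ≤ t * (-f y) := (div_le_iff₀ hny).1 ht2
      nlinarith
  · -- easy direction
    intro w hw
    obtain ⟨l, hl, x, hx, rfl⟩ := (hDmem w).1 hw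
    intro z hz
    have h1 : 1 ≤ ⟪x, z⟫ := by rw [real_inner_comm]; exact hz x hx
    rw [real_inner_smul_left]
    nlinarith
end

section
/- For a nonempty closed convex set C not containing the origin, cl cone(C′) = C* = (C′)_∞, i.e., the closed conical hull of the antipolar equals the positive polar cone of C, which equals the recession cone of the antipolar. -/
open scoped RealInnerProductSpace Pointwise

/-- The positive polar (dual) cone `C* = {y : ⟨x,y⟩ ≥ 0 for all x ∈ C}`. -/
def posPolar {E : Type*} [NormedAddCommGroup E] [InnerProductSpace ℝ E] (C : Set E) :
    Set E :=
  {y : E | ∀ x ∈ C, 0 ≤ ⟪x, y⟫}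

/-- The conical hull `cone D = ⋃_{λ ≥ 0} λD`. -/
def coneHull {E : Type*} [NormedAddCommGroup E] [NormedSpace ℝ E] (D : Set E) : Set E :=
  ⋃ (l : ℝ) (_ : 0 ≤ l), l • D

/-- The recession cone of a set `D`. -/
def recessionCone {E : Type*} [NormedAddCommGroup E] [NormedSpace ℝ E] (D : Set E) :
    Set E :=
  {y : E | ∀ x ∈ D, ∀ t : ℝ, 0 ≤ t → x + t • y ∈ D}

/-! Strict separation of `0` from `C` gives a point `w` of the antipolar `C′`. For `y ∈ C*` the
whole ray `w + t y` (`t ≥ 0`) stays in `C′`, so `C* ⊆ (C′)_∞`, and `y = lim ε • (ε⁻¹ • y + w)` lies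
in the closed conical hull of `C′`. Conversely, if `⟪y, x⟫ < 0` for some `x ∈ C`, then
`⟪w + t y, x⟫` drops below `1` for large `t`. -/

section InnerProductSpace

variable {E : Type*} [NormedAddCommGroup E] [InnerProductSpace ℝ E] {C : Set E}

theorem isClosed_posPolar (C : Set E) : IsClosed (posPolar C) := by
  have : posPolar C = ⋂ x ∈ C, {y : E | 0 ≤ ⟪x, y⟫} := by
    ext y; simp [posPolar]
  rw [this]
  exact isClosed_biInter fun x _ =>
    isClosed_le continuous_const (continuous_const.inner continuous_id)

theorem coneHull_antipolar_subset_posPolar (C : Set E) :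
    coneHull (antipolar C) ⊆ posPolar C := by
  intro z hz
  simp only [coneHull, Set.mem_iUnion] at hz
  obtain ⟨l, hl, w, hw, rfl⟩ := hz
  intro x hx
  rw [real_inner_comm, real_inner_smul_left]
  exact mul_nonneg hl (zero_le_one.trans (hw x hx))

theorem antipolar_nonempty [CompleteSpace E] (hclosed : IsClosed C) (hconv : Convex ℝ C)
    (h0 : (0 : E) ∉ C) : (antipolar C).Nonempty := by
  obtain ⟨f, u, hfu, hub⟩ := geometric_hahn_banach_point_closed hconv hclosed h0
  have hu : 0 < u := by simpa using hfu
  refine ⟨u⁻¹ • (InnerProductSpace.toDual ℝ E).symm f, fun x hx => ?_⟩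
  rw [real_inner_smul_left, InnerProductSpace.toDual_symm_apply, ← div_eq_inv_mul,
    one_le_div hu]
  exact (hub x hx).le

theorem add_smul_mem_antipolar {w y : E} (hw : w ∈ antipolar C) (hy : y ∈ posPolar C) {t : ℝ}
    (ht : 0 ≤ t) : w + t • y ∈ antipolar C := by
  intro x hx
  rw [inner_add_left, real_inner_smul_left, real_inner_comm x y]
  nlinarith [hw x hx, hy x hx]

theorem posPolar_subset_recessionCone_antipolar (C : Set E) :
    posPolar C ⊆ recessionCone (antipolar C) :=
  fun _ hy _ hw _ ht => add_smul_mem_antipolar hw hy ht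

theorem recessionCone_antipolar_subset_posPolar {w : E} (hw : w ∈ antipolar C) :
    recessionCone (antipolar C) ⊆ posPolar C := by
  intro y hy x hx
  by_contra! hneg
  set a := ⟪w, x⟫
  set b := ⟪y, x⟫ with hb
  have hb0 : b < 0 := by rwa [hb, real_inner_comm]
  -- at `t = -a / b` the ray `w + t • y` reaches the hyperplane `⟪·, x⟫ = 0`
  have hray := hy w hw (-a / b) (div_nonneg_of_nonpos (by linarith [hw x hx]) hb0.le) x hx
  rw [inner_add_left, real_inner_smul_left, div_mul_cancel₀ _ hb0.ne] at hray
  linarith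

theorem posPolar_subset_closure_coneHull_antipolar {w : E} (hw : w ∈ antipolar C) :
    posPolar C ⊆ closure (coneHull (antipolar C)) := by
  intro y hy
  have hmem : ∀ᶠ ε in nhdsWithin (0 : ℝ) (Set.Ioi 0), y + ε • w ∈ coneHull (antipolar C) := by
    filter_upwards [self_mem_nhdsWithin] with ε (hε : 0 < ε)
    simp only [coneHull, Set.mem_iUnion]
    refine ⟨ε, hε.le, w + ε⁻¹ • y, add_smul_mem_antipolar hw hy (inv_nonneg.2 hε.le), ?_⟩
    show ε • (w + ε⁻¹ • y) = y + ε • w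
    rw [smul_add, smul_smul, mul_inv_cancel₀ hε.ne', one_smul, add_comm]
  have hlim : Filter.Tendsto (fun ε : ℝ => y + ε • w) (nhdsWithin 0 (Set.Ioi 0)) (nhds y) := by
    have hcont : Continuous fun ε : ℝ => y + ε • w := by fun_prop
    simpa using (hcont.tendsto 0).mono_left nhdsWithin_le_nhds
  exact mem_closure_of_tendsto hlim hmem

theorem closure_coneHull_antipolar_eq_posPolar {w : E} (hw : w ∈ antipolar C) :
    closure (coneHull (antipolar C)) = posPolar C :=
  (closure_minimal (coneHull_antipolar_subset_posPolar C) (isClosed_posPolar C)).antisymm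
    (posPolar_subset_closure_coneHull_antipolar hw)

theorem posPolar_eq_recessionCone_antipolar {w : E} (hw : w ∈ antipolar C) :
    posPolar C = recessionCone (antipolar C) :=
  (posPolar_subset_recessionCone_antipolar C).antisymm
    (recessionCone_antipolar_subset_posPolar hw)

end InnerProductSpace

theorem clConeHull_antipolar_eq_posPolar_eq_recessionCone_general {E : Type*}
    [NormedAddCommGroup E] [InnerProductSpace ℝ E] [FiniteDimensional ℝ E] (C : Set E)
    (hclosed : IsClosed C) (hconv : Convex ℝ C) (h0 : (0 : E) ∉ C) :
    closure (coneHull (antipolar C)) = posPolar C ∧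
    posPolar C = recessionCone (antipolar C) := by
  obtain ⟨w, hw⟩ := antipolar_nonempty hclosed hconv h0
  exact ⟨closure_coneHull_antipolar_eq_posPolar hw, posPolar_eq_recessionCone_antipolar hw⟩

theorem clConeHull_antipolar_eq_posPolar_eq_recessionCone {E : Type*}
    [NormedAddCommGroup E] [InnerProductSpace ℝ E] [FiniteDimensional ℝ E] (C : Set E)
    (hne : C.Nonempty) (hclosed : IsClosed C) (hconv : Convex ℝ C) (h0 : (0 : E) ∉ C) :
    closure (coneHull (antipolar C)) = posPolar C ∧
    posPolar C = recessionCone (antipolar C) :=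
  clConeHull_antipolar_eq_posPolar_eq_recessionCone_general C hclosed hconv h0
end

section
/- Let ρ be a closed gauge, b a point, and 0 < σ < ρ(b). Then the antipolar of C = {x : ρ(b − x) ≤ σ} is C′ = {y : ⟨b,y⟩ − σρ°(y) ≥ 1}. -/
open scoped RealInnerProductSpace ENNReal

/-- Antipolar of `C = {x : ρ(b − x) ≤ σ}` with `0 < σ < ρ(b)`:
`C′ = {y : ⟨b,y⟩ − σρ°(y) ≥ 1}`, stated as `σ·ρ°(y) + 1 ≤ ⟨b,y⟩` in `ℝ≥0∞`. -/
theorem antipolar_of_rho_ball {E : Type*} [NormedAddCommGroup E] [InnerProductSpace ℝ E]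
    [FiniteDimensional ℝ E] (ρ : E → ℝ≥0∞) (hρ : IsGauge ρ)
    (hρclosed : LowerSemicontinuous ρ) (b : E) (σ : ℝ) (hσ : 0 < σ)
    (hσρ : ENNReal.ofReal σ < ρ b) :
    antipolar {x : E | ρ (b - x) ≤ ENNReal.ofReal σ} =
      {y : E | ENNReal.ofReal σ * polarGauge ρ y + 1 ≤ ENNReal.ofReal ⟪b, y⟫} := by
  obtain ⟨h0, hhom, hconv⟩ := hρ
  ext y
  simp only [antipolar, Set.mem_setOf_eq]
  constructor
  · intro hy
    have hb1 : (1:ℝ) ≤ ⟪y, b⟫ := hy b (by simp [h0])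
    have key : ∀ u : E, ρ u ≤ 1 →
        ENNReal.ofReal σ * ENNReal.ofReal ⟪u, y⟫ + 1 ≤ ENNReal.ofReal ⟪b, y⟫ := by
      intro u hu
      have hx : ρ (b - (b - σ • u)) ≤ ENNReal.ofReal σ := by
        rw [sub_sub_cancel, hhom σ u hσ.le]
        calc ENNReal.ofReal σ * ρ u ≤ ENNReal.ofReal σ * 1 := by gcongr
          _ = ENNReal.ofReal σ := mul_one _
      have h1 : (1:ℝ) ≤ ⟪y, b⟫ - σ * ⟪y, u⟫ := by
        have := hy _ hx
        rwa [inner_sub_right, real_inner_smul_right] at this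
      rcases le_or_gt ⟪u, y⟫ 0 with h | h
      · rw [ENNReal.ofReal_eq_zero.2 h, mul_zero, zero_add]
        exact ENNReal.one_le_ofReal.2 (by rw [real_inner_comm]; exact hb1)
      · rw [← ENNReal.ofReal_mul hσ.le, ← ENNReal.ofReal_one,
          ← ENNReal.ofReal_add (by positivity) zero_le_one]
        apply ENNReal.ofReal_le_ofReal
        rw [real_inner_comm y u, real_inner_comm y b]
        linarith
    haveI : Nonempty {u : E // ρ u ≤ 1} := ⟨⟨0, by simp [h0]⟩⟩
    have hrw : polarGauge ρ y = ⨆ u : {u : E // ρ u ≤ 1}, ENNReal.ofReal ⟪(u:E), y⟫ := by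
      rw [polarGauge]; exact iSup_subtype'
    rw [hrw, ENNReal.mul_iSup, ENNReal.iSup_add]
    exact iSup_le fun u => key u u.2
  · intro hy x hx
    have hb1 : (1:ℝ) ≤ ⟪b, y⟫ :=
      ENNReal.one_le_ofReal.1 (le_trans (le_add_self) hy)
    set u := σ⁻¹ • (b - x) with hu_def
    have hzu : σ • u = b - x := smul_inv_smul₀ hσ.ne' (b - x)
    have hu : ρ u ≤ 1 := by
      rw [hu_def, hhom σ⁻¹ _ (inv_nonneg.2 hσ.le)]
      calc ENNReal.ofReal σ⁻¹ * ρ (b - x) ≤ ENNReal.ofReal σ⁻¹ * ENNReal.ofReal σ := by gcongr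
        _ = ENNReal.ofReal (σ⁻¹ * σ) := (ENNReal.ofReal_mul (inv_nonneg.2 hσ.le)).symm
        _ = 1 := by rw [inv_mul_cancel₀ hσ.ne', ENNReal.ofReal_one]
    have hle : ENNReal.ofReal σ * ENNReal.ofReal ⟪u, y⟫ + 1 ≤ ENNReal.ofReal ⟪b, y⟫ := by
      refine le_trans ?_ hy
      gcongr
      exact le_iSup₂ (f := fun x _ => ENNReal.ofReal ⟪x, y⟫) u hu
    have hyx : ⟪y, x⟫ = ⟪y, b⟫ - σ * ⟪y, u⟫ := by
      have : x = b - σ • u := by rw [hzu]; abel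
      rw [this, inner_sub_right, real_inner_smul_right]
    rcases le_or_gt ⟪u, y⟫ 0 with h | h
    · have hc : ⟪y, u⟫ = ⟪u, y⟫ := real_inner_comm u y
      have hc2 : ⟪y, b⟫ = ⟪b, y⟫ := real_inner_comm b y
      rw [hyx]
      nlinarith
    · have hreal : σ * ⟪u, y⟫ + 1 ≤ ⟪b, y⟫ := by
        rw [← ENNReal.ofReal_mul hσ.le, ← ENNReal.ofReal_one,
          ← ENNReal.ofReal_add (by positivity) zero_le_one] at hle
        exact (ENNReal.ofReal_le_ofReal_iff (by linarith)).1 hle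
      rw [hyx, real_inner_comm u y, real_inner_comm b y]; linarith
end
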